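/- arXiv:2306.06101 — 10 statements merged into one kernel-verified Lean document; each statement's English description precedes it below -/
import Mathlib

section
/- For any sequence of nonnegative real numbers a_0, ..., a_n with positive partial sums, the sum over k of a_k / sqrt(sum_{i=0}^k a_i) is bounded below by sqrt(sum_{k=0}^n a_k) and above by 2*sqrt(sum_{k=0}^n a_k). -/
open Finset

theorem sum_div_sqrt_partial_sum_bounds (n : ℕ) (a : ℕ → ℝ)
    (ha : ∀ k ≤ n, 0 ≤ a k)
    (hpos : ∀ k ≤ n, 0 < ∑ i ∈ range (k + 1), a i) :
    Real.sqrt (∑ k ∈ range (n + 1), a k) ≤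
      ∑ k ∈ range (n + 1), a k / Real.sqrt (∑ i ∈ range (k + 1), a i) ∧
    ∑ k ∈ range (n + 1), a k / Real.sqrt (∑ i ∈ range (k + 1), a i) ≤
      2 * Real.sqrt (∑ k ∈ range (n + 1), a k) := by
  induction n with
  | zero =>
    have h0 : 0 < a 0 := by simpa using hpos 0 le_rfl
    simp only [zero_add, sum_range_one, Real.div_sqrt]
    exact ⟨le_rfl, by nlinarith [Real.sqrt_nonneg (a 0)]⟩
  | succ n ih =>
    have ha' : ∀ k ≤ n, 0 ≤ a k := fun k hk => ha k (hk.trans (Nat.le_succ n))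
    have hpos' : ∀ k ≤ n, 0 < ∑ i ∈ range (k + 1), a i :=
      fun k hk => hpos k (hk.trans (Nat.le_succ n))
    obtain ⟨ih1, ih2⟩ := ih ha' hpos'
    have hS : 0 < ∑ k ∈ range (n + 1), a k := hpos' n le_rfl
    have haS : 0 ≤ a (n + 1) := ha _ le_rfl
    set S := ∑ k ∈ range (n + 1), a k with hSdef
    have hsum : ∑ k ∈ range (n + 1 + 1), a k = S + a (n + 1) := sum_range_succ a (n + 1)
    have hT : 0 < S + a (n + 1) := by linarith
    set x := Real.sqrt S with hx
    set y := Real.sqrt (S + a (n + 1)) with hy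
    have hx2 : x ^ 2 = S := Real.sq_sqrt hS.le
    have hy2 : y ^ 2 = S + a (n + 1) := Real.sq_sqrt hT.le
    have hxy : x ≤ y := Real.sqrt_le_sqrt (by linarith)
    have hx0 : 0 ≤ x := Real.sqrt_nonneg _
    have hy0 : 0 < y := Real.sqrt_pos.mpr hT
    rw [sum_range_succ (fun k => a k / Real.sqrt (∑ i ∈ range (k + 1), a i)) (n + 1),
      hsum]
    have key1 : y - x ≤ a (n + 1) / y := by
      rw [le_div_iff₀ hy0]
      nlinarith
    have key2 : a (n + 1) / y ≤ 2 * y - 2 * x := by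
      rw [div_le_iff₀ hy0]
      nlinarith [sq_nonneg (x - y)]
    rw [← hy]
    exact ⟨by linarith, by linarith⟩
end

section
/- For any sequence of nonnegative reals a_0, ..., a_n and any A > 0, sum_{k=0}^n a_k / (A + sum_{i=0}^k a_i) <= log(A + sum_{k=0}^n a_k) - log(A). -/
open Finset

lemma aux_div_le_log_sub {x y : ℝ} (hx : 0 < x) (hxy : x ≤ y) :
    (y - x) / y ≤ Real.log y - Real.log x := by
  have hy : 0 < y := lt_of_lt_of_le hx hxy
  have h := Real.log_le_sub_one_of_pos (div_pos hx hy)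
  rw [Real.log_div hx.ne' hy.ne'] at h
  have : (y - x) / y = 1 - x / y := by field_simp
  linarith

theorem sum_div_shifted_partial_sum_le_log (n : ℕ) (a : ℕ → ℝ) (A : ℝ)
    (ha : ∀ k ≤ n, 0 ≤ a k) (hA : 0 < A) :
    ∑ k ∈ range (n + 1), a k / (A + ∑ i ∈ range (k + 1), a i) ≤
      Real.log (A + ∑ k ∈ range (n + 1), a k) - Real.log A := by
  induction n with
  | zero =>
      have h0 : 0 ≤ a 0 := ha 0 le_rfl
      have := aux_div_le_log_sub hA (by linarith : A ≤ A + a 0)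
      simpa using this
  | succ m ih =>
      have ha' : ∀ k ≤ m, 0 ≤ a k := fun k hk => ha k (hk.trans (Nat.le_succ m))
      have ihm := ih ha'
      rw [Finset.sum_range_succ, Finset.sum_range_succ (f := a)]
      have hS : 0 ≤ ∑ i ∈ range (m + 1), a i :=
        Finset.sum_nonneg fun i hi => ha' i (Nat.lt_succ_iff.mp (Finset.mem_range.mp hi))
      have hm1 : 0 ≤ a (m + 1) := ha (m + 1) le_rfl
      have hx : (0:ℝ) < A + ∑ i ∈ range (m + 1), a i := by linarith
      have key := aux_div_le_log_sub hx
        (by linarith : A + ∑ i ∈ range (m + 1), a i ≤ A + (∑ i ∈ range (m + 1), a i + a (m + 1)))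
      have : a (m + 1) / (A + (∑ i ∈ range (m + 1), a i + a (m + 1))) ≤
          Real.log (A + (∑ i ∈ range (m + 1), a i + a (m + 1))) -
            Real.log (A + ∑ i ∈ range (m + 1), a i) := by
        convert key using 2
        ring
      linarith
end

section
/- Let d_0 <= d_1 <= ... <= d_N be positive real numbers and suppose N >= 2*(1 + log_2(d_N/d_0)). Then min over t < N of d_{t+1}/sqrt(sum_{k=0}^t d_k^2) is at most 4*sqrt(1 + log_2(d_N/d_0))/sqrt(N). -/
open Finset

set_option maxHeartbeats 1000000 in
theorem d_sequence_min_ratio_bound (N : ℕ) (d : ℕ → ℝ)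
    (hpos : ∀ k ≤ N, 0 < d k)
    (hmono : ∀ k, k + 1 ≤ N → d k ≤ d (k + 1))
    (hN : (N : ℝ) ≥ 2 * (1 + Real.logb 2 (d N / d 0))) :
    ∃ t < N, d (t + 1) / Real.sqrt (∑ k ∈ range (t + 1), (d k) ^ 2) ≤
      4 * Real.sqrt (1 + Real.logb 2 (d N / d 0)) / Real.sqrt N := by
  set L : ℝ := 1 + Real.logb 2 (d N / d 0) with hLdef
  have hd0 : 0 < d 0 := hpos 0 (Nat.zero_le N)
  have mono : ∀ a b, a ≤ b → b ≤ N → d a ≤ d b := by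
    intro a b hab hbN
    induction b with
    | zero => interval_cases a; rfl
    | succ n ih =>
      rcases Nat.lt_or_ge a (n+1) with h | h
      · exact le_trans (ih (Nat.lt_succ_iff.mp h) (le_trans (Nat.le_succ n) hbN))
          (hmono n hbN)
      · have : a = n+1 := le_antisymm hab h
        rw [this]
  have hdN0 : d 0 ≤ d N := mono 0 N (Nat.zero_le N) le_rfl
  have hratio : 1 ≤ d N / d 0 := (one_le_div hd0).mpr hdN0
  have hL1 : (1:ℝ) ≤ L := by
    have := Real.logb_nonneg (by norm_num : (1:ℝ) < 2) hratio
    simp only [hLdef]; linarith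
  have hL0 : (0:ℝ) < L := lt_of_lt_of_le one_pos hL1
  have hLne : L ≠ 0 := ne_of_gt hL0
  clear_value L
  have hN2 : (2:ℝ) ≤ (N:ℝ) := le_trans (by linarith) hN
  have hNpos : (0:ℝ) < (N:ℝ) := by linarith
  set M : ℕ := ⌈(N:ℝ)/(4*L)⌉₊ with hMdef
  have hMr : (N:ℝ)/(4*L) ≤ (M:ℝ) := Nat.le_ceil _
  have hMpos : 0 < M := Nat.ceil_pos.mpr (div_pos hNpos (by linarith))
  have hMup : (M:ℝ) ≤ 3*(N:ℝ)/(4*L) := by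
    have h1 : (M:ℝ) < (N:ℝ)/(4*L) + 1 := Nat.ceil_lt_add_one (by positivity)
    have h2 : (1:ℝ) ≤ (N:ℝ)/(2*L) := (one_le_div (by linarith)).mpr (by linarith)
    have h3 : (N:ℝ)/(2*L) = 2*((N:ℝ)/(4*L)) := by
      field_simp
      ring
    have h4 : 3*(N:ℝ)/(4*L) = 3*((N:ℝ)/(4*L)) := by ring
    linarith
  clear_value M
  by_cases hex : ∃ t, M ≤ t+1 ∧ t+1 ≤ N ∧ d (t+1) ≤ 2 * d (t+1-M)
  · obtain ⟨t, h1, h2, h3⟩ := hex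
    refine ⟨t, by omega, ?_⟩
    set S : ℝ := ∑ k ∈ range (t + 1), (d k) ^ 2 with hSdef
    have hdt1 : 0 < d (t+1) := hpos (t+1) h2
    have hdprev : 0 < d (t+1-M) := hpos _ (by omega)
    have hsub : Finset.Ico (t+1-M) (t+1) ⊆ range (t+1) := by
      intro x hx; simp only [Finset.mem_Ico, Finset.mem_range] at *; omega
    have hS1 : (M:ℝ) * d (t+1-M)^2 ≤ S := by
      have hle : (M:ℝ) * d (t+1-M)^2 ≤ ∑ k ∈ Finset.Ico (t+1-M) (t+1), (d k)^2 := by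
        have hcard : (Finset.Ico (t+1-M) (t+1)).card = M := by
          rw [Nat.card_Ico]; omega
        calc (M:ℝ) * d (t+1-M)^2
            = ∑ _k ∈ Finset.Ico (t+1-M) (t+1), d (t+1-M)^2 := by
              rw [Finset.sum_const, hcard, nsmul_eq_mul]
          _ ≤ ∑ k ∈ Finset.Ico (t+1-M) (t+1), (d k)^2 := by
              apply Finset.sum_le_sum
              intro k hk
              simp only [Finset.mem_Ico] at hk
              have : d (t+1-M) ≤ d k := mono _ _ hk.1 (by omega)
              nlinarith [hdprev]
      refine le_trans hle ?_
      apply Finset.sum_le_sum_of_subset_of_nonneg hsub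
      intro k _ _; positivity
    have hMrpos : (0:ℝ) < (M:ℝ) := by exact_mod_cast hMpos
    have hSpos : 0 < S := lt_of_lt_of_le (by positivity) hS1
    have hS2 : (M:ℝ) * (d (t+1)/2)^2 ≤ S := by
      have : (d (t+1)/2)^2 ≤ d (t+1-M)^2 := by nlinarith
      nlinarith
    have hkey : Real.sqrt M * d (t+1) ≤ 2 * Real.sqrt S := by
      have h := Real.sqrt_le_sqrt hS2
      rw [Real.sqrt_mul (Nat.cast_nonneg M), Real.sqrt_sq (by positivity)] at h
      linarith
    have hNM : Real.sqrt N ≤ 2 * Real.sqrt L * Real.sqrt M := by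
      rw [show 2 * Real.sqrt L * Real.sqrt M
          = Real.sqrt ((2 * Real.sqrt L * Real.sqrt M)^2) from
          (Real.sqrt_sq (by positivity)).symm]
      apply Real.sqrt_le_sqrt
      have hsL : Real.sqrt L ^ 2 = L := Real.sq_sqrt hL0.le
      have hsM : Real.sqrt M ^ 2 = (M:ℝ) := Real.sq_sqrt (Nat.cast_nonneg M)
      have : (N:ℝ) ≤ 4 * L * M := by
        have := (div_le_iff₀ (show (0:ℝ) < 4*L by linarith)).mp hMr
        linarith
      nlinarith
    have hsS : 0 < Real.sqrt S := Real.sqrt_pos.mpr hSpos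
    have hsN : 0 < Real.sqrt N := Real.sqrt_pos.mpr hNpos
    rw [div_le_div_iff₀ hsS hsN]
    have hsL0 : 0 ≤ Real.sqrt L := Real.sqrt_nonneg L
    calc d (t+1) * Real.sqrt N ≤ d (t+1) * (2 * Real.sqrt L * Real.sqrt M) :=
          mul_le_mul_of_nonneg_left hNM hdt1.le
      _ = 2 * Real.sqrt L * (Real.sqrt M * d (t+1)) := by ring
      _ ≤ 2 * Real.sqrt L * (2 * Real.sqrt S) :=
          mul_le_mul_of_nonneg_left hkey (by positivity)
      _ = 4 * Real.sqrt L * Real.sqrt S := by ring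
  · push_neg at hex
    exfalso
    have claim : ∀ j : ℕ, j * M ≤ N → (2:ℝ)^j * d 0 ≤ d (j * M) := by
      intro j
      induction j with
      | zero => intro _; simp
      | succ j ih =>
        intro hjN
        rw [Nat.succ_mul] at hjN ⊢
        have hjM : j * M ≤ N := by omega
        have h := hex (j*M + M - 1) (by omega) (by omega)
        have heq1 : j*M + M - 1 + 1 = j*M + M := by omega
        rw [heq1] at h
        have heq2 : j*M + M - M = j*M := by omega
        rw [heq2] at h
        have hih := ih hjM
        calc (2:ℝ)^(j+1) * d 0 = 2 * ((2:ℝ)^j * d 0) := by ring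
          _ ≤ 2 * d (j * M) := by linarith
          _ ≤ d (j*M + M) := h.le
    set K : ℕ := N / M with hKdef
    have hKM : K * M ≤ N := Nat.div_mul_le_self N M
    have hNltK : N < (K+1) * M := (Nat.div_lt_iff_lt_mul hMpos).mp (Nat.lt_succ_self (N/M))
    clear_value K
    have hchain : (2:ℝ)^K * d 0 ≤ d N :=
      le_trans (claim K hKM) (mono (K*M) N hKM le_rfl)
    have h1 : (2:ℝ)^K ≤ d N / d 0 := (le_div_iff₀ hd0).mpr hchain
    have hlog : Real.logb 2 (d N / d 0) = L - 1 := by rw [hLdef]; ring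
    have hKL : (K:ℝ) ≤ L - 1 := by
      by_contra hcon
      push_neg at hcon
      have hlt : d N / d 0 < (2:ℝ)^K := by
        calc d N / d 0 = (2:ℝ)^(Real.logb 2 (d N / d 0)) :=
              (Real.rpow_logb (by norm_num) (by norm_num) (by positivity)).symm
          _ < (2:ℝ)^((K:ℕ):ℝ) := by
              apply Real.rpow_lt_rpow_left_iff (by norm_num : (1:ℝ) < 2) |>.mpr
              rw [hlog]; exact hcon
          _ = (2:ℝ)^K := Real.rpow_natCast 2 K
      linarith
    have hNlt : (N:ℝ) < ((K:ℝ)+1) * M := by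
      exact_mod_cast hNltK
    have hMnn : (0:ℝ) ≤ (M:ℝ) := Nat.cast_nonneg M
    have hMup' : (M:ℝ) * (4*L) ≤ 3*(N:ℝ) := (le_div_iff₀ (by linarith)).mp hMup
    have hprod : ((K:ℝ)+1) * (M:ℝ) ≤ L * (M:ℝ) :=
      mul_le_mul_of_nonneg_right (by linarith) hMnn
    have h6 : (N:ℝ) < L * (M:ℝ) := lt_of_lt_of_le hNlt hprod
    have h7 : 4*(L*(M:ℝ)) ≤ 3*(N:ℝ) := by
      calc 4*(L*(M:ℝ)) = (M:ℝ)*(4*L) := by ring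
        _ ≤ 3*(N:ℝ) := hMup'
    linarith only [h6, h7, hNpos]
end

section
/- Suppose iterates satisfy x_{k+1} = x_k - eta_k g_k in a real inner product space, and d_{n+1} is a positive real satisfying sum_{k=0}^n eta_k <g_k, x_0 - x_k> <= d_{n+1} ||x_{n+1} - x_0||. Then ||x_{n+1} - x_0|| <= 2 d_{n+1} + (1/(2 d_{n+1})) * sum_{k=0}^n eta_k^2 ||g_k||^2. -/
open Finset RealInnerProductSpace

lemma gd_identity {E : Type*} [NormedAddCommGroup E] [InnerProductSpace ℝ E]
    (n : ℕ) (x g : ℕ → E) (η : ℕ → ℝ)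
    (hstep : ∀ k ≤ n, x (k + 1) = x k - η k • g k) :
    ∑ k ∈ range (n + 1), η k * ⟪g k, x 0 - x k⟫ =
      (1/2) * ‖x (n + 1) - x 0‖ ^ 2 - (1/2) * ∑ k ∈ range (n + 1), (η k) ^ 2 * ‖g k‖ ^ 2 := by
  induction n with
  | zero =>
    simp only [range_one, sum_singleton, hstep 0 le_rfl]
    have : x 0 - η 0 • g 0 - x 0 = -(η 0 • g 0) := by abel
    rw [this, norm_neg, norm_smul]
    simp [mul_pow]
  | succ m ih =>
    have ih' := ih (fun k hk => hstep k (hk.trans (Nat.le_succ m)))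
    have hsplit : ∑ k ∈ range (m + 1 + 1), (η k) ^ 2 * ‖g k‖ ^ 2 =
        (∑ k ∈ range (m + 1), (η k) ^ 2 * ‖g k‖ ^ 2) + (η (m+1))^2 * ‖g (m+1)‖^2 :=
      sum_range_succ _ _
    rw [sum_range_succ, ih', hsplit, hstep (m+1) le_rfl]
    have hexp : ‖x (m + 1) - x 0 - η (m+1) • g (m+1)‖ ^ 2 =
        ‖x (m + 1) - x 0‖ ^ 2 - 2 * (η (m+1) * ⟪g (m+1), x (m+1) - x 0⟫)
          + (η (m+1))^2 * ‖g (m+1)‖^2 := by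
      rw [norm_sub_sq_real, real_inner_smul_right, real_inner_comm, norm_smul, mul_pow]
      simp [abs_mul_abs_self, sq_abs]
    have harr : x (m + 1) - η (m+1) • g (m+1) - x 0 = x (m+1) - x 0 - η (m+1) • g (m+1) := by
      abel
    rw [harr, hexp]
    have : ⟪g (m+1), x 0 - x (m+1)⟫ = -⟪g (m+1), x (m+1) - x 0⟫ := by
      rw [← inner_neg_right]; congr 1; abel
    rw [this]; ring

theorem gd_distance_bound {E : Type*} [NormedAddCommGroup E] [InnerProductSpace ℝ E]
    (n : ℕ) (x g : ℕ → E) (η : ℕ → ℝ) (d : ℝ) (hd : 0 < d)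
    (hstep : ∀ k ≤ n, x (k + 1) = x k - η k • g k)
    (hbound : ∑ k ∈ range (n + 1), η k * ⟪g k, x 0 - x k⟫ ≤ d * ‖x (n + 1) - x 0‖) :
    ‖x (n + 1) - x 0‖ ≤ 2 * d + (1 / (2 * d)) * ∑ k ∈ range (n + 1), (η k) ^ 2 * ‖g k‖ ^ 2 := by
  have hid := gd_identity n x g η hstep
  set y := ‖x (n + 1) - x 0‖ with hy
  set S := ∑ k ∈ range (n + 1), (η k) ^ 2 * ‖g k‖ ^ 2 with hS
  have hS0 : 0 ≤ S := sum_nonneg fun k _ => by positivity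
  have hy0 : 0 ≤ y := norm_nonneg _
  have key : (1/2) * y^2 - (1/2) * S ≤ d * y := by rw [← hid]; exact hbound
  have h2d : 0 < 2 * d := by linarith
  have h1 : 2 * d * y ≤ 4 * d ^ 2 + S := by nlinarith [sq_nonneg (y - 2 * d)]
  have h2 : y ≤ (4 * d ^ 2 + S) / (2 * d) := (le_div_iff₀ h2d).mpr (by linarith)
  have h3 : (4 * d ^ 2 + S) / (2 * d) = 2 * d + 1 / (2 * d) * S := by
    field_simp; ring
  linarith
end

section
/- Let f be a convex function on a real inner product space with minimizer x_* and minimum value f_*. If g_k is a subgradient of f at x_k and iterates satisfy x_{k+1} = x_k - eta_k g_k with eta_k >= 0, and D = ||x_0 - x_*||, and the estimate d-hat_{n+1} := (sum_{k=0}^n eta_k <g_k, x_0 - x_k>) / ||x_{n+1} - x_0|| (when x_{n+1} != x_0), then d-hat_{n+1} <= D. -/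
open Finset RealInnerProductSpace

theorem dhat_le_dist_to_solution {E : Type*} [NormedAddCommGroup E] [InnerProductSpace ℝ E]
    (n : ℕ) (f : E → ℝ) (hf : ConvexOn ℝ Set.univ f)
    (xstar : E) (hmin : ∀ y, f xstar ≤ f y)
    (x g : ℕ → E) (η : ℕ → ℝ) (hη : ∀ k ≤ n, 0 ≤ η k)
    (hsub : ∀ k ≤ n, ∀ y, f (x k) + ⟪g k, y - x k⟫ ≤ f y)
    (hstep : ∀ k ≤ n, x (k + 1) = x k - η k • g k)
    (hne : x (n + 1) ≠ x 0) :
    (∑ k ∈ range (n + 1), η k * ⟪g k, x 0 - x k⟫) / ‖x (n + 1) - x 0‖ ≤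
      ‖x 0 - xstar‖ := by
  have key : ∀ m, m ≤ n + 1 → x m = x 0 - ∑ k ∈ range m, η k • g k := by
    intro m hm
    induction m with
    | zero => simp
    | succ m ih =>
      rw [hstep m (Nat.lt_succ_iff.mp hm), ih (le_of_lt hm), Finset.sum_range_succ]
      abel
  have hD : (0:ℝ) < ‖x (n + 1) - x 0‖ := by
    rw [norm_pos_iff]; exact sub_ne_zero.mpr hne
  rw [div_le_iff₀ hD]
  have h1 : ∀ k ∈ range (n + 1), η k * ⟪g k, x 0 - x k⟫ ≤ ⟪η k • g k, x 0 - xstar⟫ := by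
    intro k hk
    have hk' : k ≤ n := Nat.lt_succ_iff.mp (mem_range.mp hk)
    have hs := hsub k hk' xstar
    have hle : ⟪g k, xstar - x k⟫ ≤ 0 := by
      have := hmin (x k); linarith
    have hsplit : (x 0 - x k) = (x 0 - xstar) + (xstar - x k) := by abel
    rw [real_inner_smul_left]
    have : ⟪g k, x 0 - x k⟫ ≤ ⟪g k, x 0 - xstar⟫ := by
      rw [hsplit, inner_add_right]; linarith
    exact mul_le_mul_of_nonneg_left this (hη k hk')
  calc ∑ k ∈ range (n + 1), η k * ⟪g k, x 0 - x k⟫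
      ≤ ∑ k ∈ range (n + 1), ⟪η k • g k, x 0 - xstar⟫ := Finset.sum_le_sum h1
    _ = ⟪∑ k ∈ range (n + 1), η k • g k, x 0 - xstar⟫ := (sum_inner _ _ _).symm
    _ = ⟪x 0 - x (n + 1), x 0 - xstar⟫ := by
        rw [key (n + 1) le_rfl]; congr 1; abel
    _ ≤ ‖x 0 - x (n + 1)‖ * ‖x 0 - xstar‖ := real_inner_le_norm _ _
    _ = ‖x 0 - xstar‖ * ‖x (n + 1) - x 0‖ := by rw [norm_sub_rev]; ring
end

section
/- Let d_0 <= d_1 <= ... <= d_n be positive reals, G > 0, lambda_0, ..., lambda_n positive reals, and g_0, ..., g_n vectors satisfying ||g_k|| <= G. Then the sum over k = 0, ..., n of (d_k^4 lambda_k^2 ||g_k||^2) / (d_k^2 G^2 + sum_{i=0}^k d_i^2 lambda_i^2 ||g_i||^2) is at most d_n^2 * log(1 + sum_{k=0}^n lambda_k^2). -/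
open Finset

lemma one_step_log (x y : ℝ) (hy : 0 < y) (hx : 0 ≤ x) :
    x / (y + x) ≤ Real.log (y + x) - Real.log y := by
  have hyx : 0 < y + x := by linarith
  have h := Real.log_le_sub_one_of_pos (show (0:ℝ) < y / (y + x) by positivity)
  rw [Real.log_div (ne_of_gt hy) (ne_of_gt hyx)] at h
  have : y / (y + x) - 1 = -(x / (y + x)) := by field_simp; ring
  linarith [this ▸ h]

lemma sum_div_le_log (A0 : ℝ) (hA0 : 0 < A0) (a : ℕ → ℝ) (ha : ∀ k, 0 ≤ a k) (m : ℕ) :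
    ∑ k ∈ range m, a k / (A0 + ∑ i ∈ range (k + 1), a i) ≤
      Real.log (A0 + ∑ k ∈ range m, a k) - Real.log A0 := by
  induction m with
  | zero => simp
  | succ m ih =>
    rw [Finset.sum_range_succ, Finset.sum_range_succ (f := a)]
    have hS : 0 ≤ ∑ k ∈ range m, a k := Finset.sum_nonneg fun i _ => ha i
    have hstep := one_step_log (a m) (A0 + ∑ k ∈ range m, a k) (by linarith) (ha m)
    have harr : A0 + ∑ k ∈ range m, a k + a m = A0 + (∑ k ∈ range m, a k + a m) := by ring
    rw [harr] at hstep
    linarith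

theorem weighted_gradient_sum_log_bound {E : Type*} [NormedAddCommGroup E]
    (n : ℕ) (d lam : ℕ → ℝ) (G : ℝ) (g : ℕ → E)
    (hG : 0 < G)
    (hdpos : ∀ k ≤ n, 0 < d k)
    (hdmono : ∀ k, k + 1 ≤ n → d k ≤ d (k + 1))
    (hlam : ∀ k ≤ n, 0 < lam k)
    (hg : ∀ k ≤ n, ‖g k‖ ≤ G) :
    ∑ k ∈ range (n + 1),
        (d k) ^ 4 * (lam k) ^ 2 * ‖g k‖ ^ 2 /
          ((d k) ^ 2 * G ^ 2 + ∑ i ∈ range (k + 1), (d i) ^ 2 * (lam i) ^ 2 * ‖g i‖ ^ 2) ≤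
      (d n) ^ 2 * Real.log (1 + ∑ k ∈ range (n + 1), (lam k) ^ 2) := by
  set a : ℕ → ℝ := fun i => (d i) ^ 2 * (lam i) ^ 2 * ‖g i‖ ^ 2 with ha_def
  have ha : ∀ i, 0 ≤ a i := fun i => by positivity
  -- monotonicity up to n
  have hdle : ∀ m ≤ n, ∀ k ≤ m, d k ≤ d m := by
    intro m hm
    induction m with
    | zero => intro k hk; interval_cases k; rfl
    | succ m ih =>
      intro k hk
      rcases eq_or_lt_of_le hk with h | h
      · rw [h]
      · exact le_trans (ih (by omega) k (by omega)) (hdmono m hm)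
  have hdn : 0 < d n := hdpos n le_rfl
  set A0 : ℝ := (d n) ^ 2 * G ^ 2 with hA0_def
  have hA0 : 0 < A0 := by positivity
  have step1 : ∑ k ∈ range (n + 1),
        (d k) ^ 4 * (lam k) ^ 2 * ‖g k‖ ^ 2 /
          ((d k) ^ 2 * G ^ 2 + ∑ i ∈ range (k + 1), a i) ≤
      ∑ k ∈ range (n + 1), (d n) ^ 2 * (a k / (A0 + ∑ i ∈ range (k + 1), a i)) := by
    apply Finset.sum_le_sum
    intro k hk
    have hkn : k ≤ n := Nat.lt_succ_iff.mp (Finset.mem_range.mp hk)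
    have hdk : 0 < d k := hdpos k hkn
    have hdkn : d k ≤ d n := hdle n le_rfl k hkn
    have hS : 0 ≤ ∑ i ∈ range (k + 1), a i := Finset.sum_nonneg fun i _ => ha i
    have hb : 0 < (d k) ^ 2 * G ^ 2 + ∑ i ∈ range (k + 1), a i := by positivity
    have hb' : 0 < A0 + ∑ i ∈ range (k + 1), a i := by positivity
    rw [mul_div_assoc', div_le_div_iff₀ hb hb']
    have hg2 : 0 ≤ ‖g k‖ ^ 2 := by positivity
    have hl2 : 0 ≤ (lam k) ^ 2 := by positivity
    simp only [ha_def, hA0_def]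
    nlinarith [mul_nonneg (mul_nonneg hl2 hg2) hS,
      mul_le_mul_of_nonneg_right (mul_le_mul hdkn hdkn (le_of_lt hdk) (le_of_lt hdn))
        (mul_nonneg (mul_nonneg hl2 hg2) hS),
      sq_nonneg (d k), sq_nonneg (d n)]
  have step2 := sum_div_le_log A0 hA0 a ha (n + 1)
  have step3 : Real.log (A0 + ∑ k ∈ range (n + 1), a k) - Real.log A0 ≤
      Real.log (1 + ∑ k ∈ range (n + 1), (lam k) ^ 2) := by
    have hSsum : ∑ k ∈ range (n + 1), a k ≤ A0 * ∑ k ∈ range (n + 1), (lam k) ^ 2 := by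
      rw [Finset.mul_sum]
      apply Finset.sum_le_sum
      intro k hk
      have hkn : k ≤ n := Nat.lt_succ_iff.mp (Finset.mem_range.mp hk)
      have hdk : 0 < d k := hdpos k hkn
      have hdkn : d k ≤ d n := hdle n le_rfl k hkn
      have hgk : ‖g k‖ ≤ G := hg k hkn
      have hgk0 : 0 ≤ ‖g k‖ := norm_nonneg _
      simp only [ha_def, hA0_def]
      have h1 : (d k) ^ 2 ≤ (d n) ^ 2 := by nlinarith
      have h2 : ‖g k‖ ^ 2 ≤ G ^ 2 := by nlinarith
      calc (d k) ^ 2 * (lam k) ^ 2 * ‖g k‖ ^ 2 ≤ (d n) ^ 2 * (lam k) ^ 2 * G ^ 2 := by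
            apply mul_le_mul
            · exact mul_le_mul_of_nonneg_right h1 (by positivity)
            · exact h2
            · positivity
            · positivity
        _ = (d n) ^ 2 * G ^ 2 * (lam k) ^ 2 := by ring
    rw [← Real.log_div (by positivity) (ne_of_gt hA0)]
    apply Real.log_le_log (by positivity)
    rw [div_le_iff₀ hA0]
    have hSnn : 0 ≤ ∑ k ∈ range (n + 1), a k := Finset.sum_nonneg fun i _ => ha i
    nlinarith
  calc ∑ k ∈ range (n + 1),
        (d k) ^ 4 * (lam k) ^ 2 * ‖g k‖ ^ 2 /
          ((d k) ^ 2 * G ^ 2 + ∑ i ∈ range (k + 1), a i)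
      ≤ ∑ k ∈ range (n + 1), (d n) ^ 2 * (a k / (A0 + ∑ i ∈ range (k + 1), a i)) := step1
    _ = (d n) ^ 2 * ∑ k ∈ range (n + 1), a k / (A0 + ∑ i ∈ range (k + 1), a i) := by
        rw [Finset.mul_sum]
    _ ≤ (d n) ^ 2 * (Real.log (A0 + ∑ k ∈ range (n + 1), a k) - Real.log A0) := by
        apply mul_le_mul_of_nonneg_left step2 (by positivity)
    _ ≤ (d n) ^ 2 * Real.log (1 + ∑ k ∈ range (n + 1), (lam k) ^ 2) := by
        apply mul_le_mul_of_nonneg_left step3 (by positivity)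
end

section
/- Let s_0 = 0 and s_{k+1} = s_k + lambda_k g_k in a real inner product space, with positive nonincreasing step sizes gamma_0 >= gamma_1 >= ... Then sum_{k=0}^n lambda_k gamma_k <g_k, s_k> >= (gamma_{n+1}/2) ||s_{n+1}||^2 - (1/2) sum_{k=0}^n gamma_k lambda_k^2 ||g_k||^2. -/
open Finset RealInnerProductSpace

theorem da_inner_sum_lower_bound {E : Type*} [NormedAddCommGroup E] [InnerProductSpace ℝ E]
    (n : ℕ) (s g : ℕ → E) (lam γ : ℕ → ℝ)
    (hs0 : s 0 = 0)
    (hs : ∀ k, s (k + 1) = s k + lam k • g k)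
    (hγpos : ∀ k, 0 < γ k)
    (hγmono : ∀ k, γ (k + 1) ≤ γ k) :
    ∑ k ∈ range (n + 1), lam k * γ k * ⟪g k, s k⟫ ≥
      (γ (n + 1) / 2) * ‖s (n + 1)‖ ^ 2 -
        (1 / 2) * ∑ k ∈ range (n + 1), γ k * (lam k) ^ 2 * ‖g k‖ ^ 2 := by
  have key : ∀ k, lam k * γ k * ⟪g k, s k⟫ =
      (γ k / 2) * (‖s (k + 1)‖ ^ 2 - ‖s k‖ ^ 2) - (1 / 2) * (γ k * (lam k) ^ 2 * ‖g k‖ ^ 2) := by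
    intro k
    have h1 : ‖s (k + 1)‖ ^ 2 = ‖s k‖ ^ 2 + 2 * (lam k * ⟪g k, s k⟫) + (lam k) ^ 2 * ‖g k‖ ^ 2 := by
      rw [hs k, @norm_add_sq_real]
      rw [real_inner_smul_right, real_inner_comm, norm_smul]
      rw [mul_pow]
      simp [sq_abs]
    rw [h1]; ring
  have abel : ∀ m : ℕ, ∑ k ∈ range (m + 1), (γ k / 2) * (‖s (k + 1)‖ ^ 2 - ‖s k‖ ^ 2) ≥
      (γ (m + 1) / 2) * ‖s (m + 1)‖ ^ 2 := by
    intro m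
    induction m with
    | zero =>
      simp only [zero_add, range_one, sum_singleton, hs0, norm_zero]
      have := hγmono 0
      nlinarith [sq_nonneg ‖s 1‖]
    | succ m ih =>
      rw [sum_range_succ]
      have h2 := hγmono (m + 1)
      have h3 := hγmono (m + 2)
      nlinarith [sq_nonneg ‖s (m + 2)‖, sq_nonneg ‖s (m + 1)‖]
  calc ∑ k ∈ range (n + 1), lam k * γ k * ⟪g k, s k⟫
      = ∑ k ∈ range (n + 1), ((γ k / 2) * (‖s (k + 1)‖ ^ 2 - ‖s k‖ ^ 2)
          - (1 / 2) * (γ k * (lam k) ^ 2 * ‖g k‖ ^ 2)) := by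
        exact sum_congr rfl fun k _ => key k
    _ = ∑ k ∈ range (n + 1), (γ k / 2) * (‖s (k + 1)‖ ^ 2 - ‖s k‖ ^ 2)
          - (1 / 2) * ∑ k ∈ range (n + 1), γ k * (lam k) ^ 2 * ‖g k‖ ^ 2 := by
        rw [sum_sub_distrib, mul_sum]
    _ ≥ (γ (n + 1) / 2) * ‖s (n + 1)‖ ^ 2
          - (1 / 2) * ∑ k ∈ range (n + 1), γ k * (lam k) ^ 2 * ‖g k‖ ^ 2 := by
        have := abel n
        linarith
end

section
/- Let f be convex on a real inner product space with minimizer x_* and f_* = f(x_*), D = ||x_0 - x_*||. Let g_k be subgradients of f at x_k, lambda_k >= 0, s_{n+1} = sum_{k=0}^n lambda_k g_k, and x_k = x_0 - gamma_k s_k (dual averaging iterates). Then sum_{k=0}^n lambda_k (f(x_k) - f_*) <= D ||s_{n+1}|| - sum_{k=0}^n lambda_k <g_k, x_0 - x_k>. -/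
open Finset RealInnerProductSpace

theorem da_weighted_function_gap_bound {E : Type*} [NormedAddCommGroup E] [InnerProductSpace ℝ E]
    (n : ℕ) (f : E → ℝ) (hf : ConvexOn ℝ Set.univ f)
    (xstar : E) (hmin : ∀ y, f xstar ≤ f y)
    (x g s : ℕ → E) (lam γ : ℕ → ℝ)
    (hlam : ∀ k ≤ n, 0 ≤ lam k)
    (hs0 : s 0 = 0)
    (hs : ∀ k, s (k + 1) = s k + lam k • g k)
    (hsub : ∀ k ≤ n, ∀ y, f (x k) + ⟪g k, y - x k⟫ ≤ f y)
    (hx : ∀ k ≤ n, x k = x 0 - γ k • s k) :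
    ∑ k ∈ range (n + 1), lam k * (f (x k) - f xstar) ≤
      ‖x 0 - xstar‖ * ‖s (n + 1)‖ -
        ∑ k ∈ range (n + 1), lam k * ⟪g k, x 0 - x k⟫ := by
  have hsform : ∀ m, s m = ∑ k ∈ range m, lam k • g k := by
    intro m
    induction m with
    | zero => simpa using hs0
    | succ m ih => rw [hs, ih, Finset.sum_range_succ]
  have key : ∀ k ≤ n, lam k * (f (x k) - f xstar) + lam k * ⟪g k, x 0 - x k⟫ ≤
      lam k * ⟪g k, x 0 - xstar⟫ := by
    intro k hk
    have h1 := hsub k hk xstar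
    have h3 : ⟪g k, xstar - x k⟫ = ⟪g k, x 0 - x k⟫ - ⟪g k, x 0 - xstar⟫ := by
      rw [← inner_sub_right]
      congr 1
      abel
    have h2 : f (x k) - f xstar + ⟪g k, x 0 - x k⟫ ≤ ⟪g k, x 0 - xstar⟫ := by
      linarith
    nlinarith [mul_le_mul_of_nonneg_left h2 (hlam k hk)]
  have hsumle : ∑ k ∈ range (n+1), (lam k * (f (x k) - f xstar) + lam k * ⟪g k, x 0 - x k⟫) ≤
      ∑ k ∈ range (n+1), lam k * ⟪g k, x 0 - xstar⟫ :=
    Finset.sum_le_sum fun k hk => key k (Nat.lt_succ_iff.mp (mem_range.mp hk))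
  have hinner : ∑ k ∈ range (n+1), lam k * ⟪g k, x 0 - xstar⟫ = ⟪s (n+1), x 0 - xstar⟫ := by
    rw [hsform, sum_inner]
    simp [real_inner_smul_left]
  have hcs : ⟪s (n+1), x 0 - xstar⟫ ≤ ‖x 0 - xstar‖ * ‖s (n+1)‖ := by
    rw [mul_comm]
    exact real_inner_le_norm _ _
  rw [Finset.sum_add_distrib] at hsumle
  linarith
end

section
/- Fix x_1 > 0 and n >= 0. Define x_* = 2^{n+1} x_1 and f(x) = |x - x_*| + x_*. Then f is convex and 1-Lipschitz on R, the gradient of f at any point x < x_* is -1, and for any points x_0 = 0 and x_1, ..., x_n with |x_k| <= 2^k x_1 for all k, we have min_{k <= n} (f(x_k) - f_*) >= 2^n x_1 = D/2 where D = |x_0 - x_*| = 2^{n+1} x_1 and f_* = min f = x_*. -/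
/-! The iterates never get past `2 ^ n * x₁`, which is only half of the way to the minimiser
`x_* = 2 ^ (n + 1) * x₁`; on that side `f` decreases with slope `-1`, so every iterate is
still at least `x_* / 2 = D / 2` above the optimal value. -/

theorem lipschitzWith_abs_sub_add_const (c d : ℝ) :
    LipschitzWith 1 (fun y : ℝ => |y - c| + d) :=
  LipschitzWith.of_dist_le_mul fun a b => by
    simpa [Real.dist_eq] using abs_abs_sub_abs_le_abs_sub (a - c) (b - c)

theorem deriv_abs_sub_add_const_of_lt {c y : ℝ} (d : ℝ) (h : y < c) :
    deriv (fun y : ℝ => |y - c| + d) y = -1 := by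
  simpa using
    (((hasDerivAt_abs_neg (sub_neg.2 h)).comp y ((hasDerivAt_id y).sub_const c)).add_const d).deriv

theorem le_abs_sub_two_mul_of_le {a y : ℝ} (h : y ≤ a) : a ≤ |y - 2 * a| := by
  rw [abs_sub_comm]
  exact le_trans (by linarith) (le_abs_self _)

theorem lower_bound_construction_general (n : ℕ) (x₁ : ℝ) (hx₁ : 0 < x₁)
    (x : ℕ → ℝ) (hx0 : x 0 = 0)
    (hb : ∀ k ≤ n, |x k| ≤ 2 ^ k * x₁) :
    ConvexOn ℝ Set.univ (fun y : ℝ => |y - 2 ^ (n + 1) * x₁| + 2 ^ (n + 1) * x₁) ∧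
    LipschitzWith 1 (fun y : ℝ => |y - 2 ^ (n + 1) * x₁| + 2 ^ (n + 1) * x₁) ∧
    (∀ y : ℝ, y < 2 ^ (n + 1) * x₁ →
      deriv (fun y : ℝ => |y - 2 ^ (n + 1) * x₁| + 2 ^ (n + 1) * x₁) y = -1) ∧
    (∀ y : ℝ, 2 ^ (n + 1) * x₁ ≤ |y - 2 ^ (n + 1) * x₁| + 2 ^ (n + 1) * x₁) ∧
    (∀ k ≤ n, (|x k - 2 ^ (n + 1) * x₁| + 2 ^ (n + 1) * x₁) - 2 ^ (n + 1) * x₁ ≥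
      2 ^ n * x₁) ∧
    (2 : ℝ) ^ n * x₁ = |x 0 - 2 ^ (n + 1) * x₁| / 2 := by
  have hx_star : (2 : ℝ) ^ (n + 1) * x₁ = 2 * (2 ^ n * x₁) := by ring
  have hiterate : ∀ k ≤ n, x k ≤ 2 ^ n * x₁ := fun k hk =>
    (le_abs_self _).trans ((hb k hk).trans (by gcongr; norm_num))
  refine ⟨(convexOn_univ_dist _).add_const _, lipschitzWith_abs_sub_add_const _ _,
    fun y hy => deriv_abs_sub_add_const_of_lt _ hy,
    fun y => le_add_of_nonneg_left (abs_nonneg _), fun k hk => ?_, ?_⟩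
  · rw [add_sub_cancel_right, hx_star]
    exact le_abs_sub_two_mul_of_le (hiterate k hk)
  · rw [hx0, zero_sub, abs_neg, abs_of_pos (by positivity)]
    ring

theorem lower_bound_construction (n : ℕ) (x₁ : ℝ) (hx₁ : 0 < x₁)
    (x : ℕ → ℝ) (hx0 : x 0 = 0) (hx1 : x 1 = x₁)
    (hb : ∀ k ≤ n, |x k| ≤ 2 ^ k * x₁) :
    ConvexOn ℝ Set.univ (fun y : ℝ => |y - 2 ^ (n + 1) * x₁| + 2 ^ (n + 1) * x₁) ∧
    LipschitzWith 1 (fun y : ℝ => |y - 2 ^ (n + 1) * x₁| + 2 ^ (n + 1) * x₁) ∧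
    (∀ y : ℝ, y < 2 ^ (n + 1) * x₁ →
      deriv (fun y : ℝ => |y - 2 ^ (n + 1) * x₁| + 2 ^ (n + 1) * x₁) y = -1) ∧
    (∀ y : ℝ, 2 ^ (n + 1) * x₁ ≤ |y - 2 ^ (n + 1) * x₁| + 2 ^ (n + 1) * x₁) ∧
    (∀ k ≤ n, (|x k - 2 ^ (n + 1) * x₁| + 2 ^ (n + 1) * x₁) - 2 ^ (n + 1) * x₁ ≥
      2 ^ n * x₁) ∧
    (2 : ℝ) ^ n * x₁ = |x 0 - 2 ^ (n + 1) * x₁| / 2 :=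
  lower_bound_construction_general n x₁ hx₁ x hx0 hb
end

section
/- With the construction f(x) = |x - 2^{n+1} x_1| + 2^{n+1} x_1, x_0 = 0, D = 2^{n+1} x_1, G = 1, and any iterates with |x_k| <= 2^k x_1: min_{k <= n} f(x_k) - f_* >= D G sqrt(log_2(D/x_1)) / (2 sqrt(n+1)). -/
theorem lower_bound_rate (n : ℕ) (x₁ : ℝ) (hx₁ : 0 < x₁)
    (x : ℕ → ℝ) (hx0 : x 0 = 0)
    (hb : ∀ k ≤ n, |x k| ≤ 2 ^ k * x₁) :
    ∀ k ≤ n,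
      (|x k - 2 ^ (n + 1) * x₁| + 2 ^ (n + 1) * x₁) - 2 ^ (n + 1) * x₁ ≥
        (2 ^ (n + 1) * x₁) * 1 * Real.sqrt (Real.logb 2 ((2 ^ (n + 1) * x₁) / x₁)) /
          (2 * Real.sqrt (n + 1)) := by
  intro k hk
  have hlog : Real.logb 2 ((2 ^ (n + 1) * x₁) / x₁) = (n + 1 : ℝ) := by
    rw [mul_div_assoc, div_self hx₁.ne', mul_one]
    rw [show ((2:ℝ) ^ (n+1)) = (2:ℝ) ^ ((n:ℝ)+1) by
      rw [← Real.rpow_natCast]; norm_num]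
    rw [Real.logb_rpow (by norm_num)] <;> norm_num
  have hs : Real.sqrt ((n : ℝ) + 1) > 0 := Real.sqrt_pos.mpr (by positivity)
  rw [hlog]
  have hrhs : (2 ^ (n + 1) * x₁) * 1 * Real.sqrt ((n:ℝ) + 1) /
      (2 * Real.sqrt (n + 1)) = 2 ^ n * x₁ := by
    rw [mul_one]
    field_simp
    ring
  rw [hrhs]
  have h1 : |x k| ≤ 2 ^ k * x₁ := hb k hk
  have h2 : (2:ℝ) ^ k * x₁ ≤ 2 ^ n * x₁ := by
    apply mul_le_mul_of_nonneg_right _ hx₁.le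
    exact pow_le_pow_right₀ (by norm_num) hk
  have h3 : |x k - 2 ^ (n + 1) * x₁| ≥ 2 ^ (n+1) * x₁ - |x k| := by
    have := abs_sub_abs_le_abs_sub (2 ^ (n + 1) * x₁) (x k)
    rw [abs_sub_comm] at this
    have h4 : |(2:ℝ) ^ (n+1) * x₁| = 2 ^ (n+1) * x₁ := abs_of_pos (by positivity)
    linarith
  have h5 : (2:ℝ) ^ (n+1) = 2 * 2 ^ n := by ring
  simp only [ge_iff_le]
  nlinarith
end
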